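/- Let w, h, n, t, R be positive integers with w·h ≤ n. Let α = (α₁,…,α_t) be even positive integers with Σᵢ αᵢ = w·h. Let E = (M₁,…,M_w) be a fixed sequence where M_i is a perfect matching between the h positions of column i and the h positions of column i+1 (indices mod w). Consider assignments of labels from [n] to all w·h positions such that each column's tuple of h labels is R-multilinear; each matching edge joining a position with label a to a position with label b yields the labeled edge {a,b}. Then the number of such label assignments for which the multiset of w·h labeled edges contains exactly t distinct labeled edges with multiplicities α₁,…,α_t is at most (5Rw)^{wh} · (wh)³ · n^{t+h}. -/

import Mathlib

/-!
Read the labels in order along the `h` paths that start in column `0` and follow the matchings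
`M₀, …, M_{w-2}`. Each label other than the first of its path either repeats, together with the
previous label, a labeled edge met earlier; then it is a neighbour of the previous label in the
edge multiset, one of at most `2Rw` candidates because every label occurs at most `Rw` times.
Or it does not, which happens at most `t + h` times (`h` path starts, `t` distinct edges).
Record each label as its rank among the candidates, or verbatim. The candidates depend only on
earlier labels, so the record is decoded from left to right, and there are at most
`(2Rw + 1)^{wh} n^{t+h}` labelings.
-/

open Finset

/-- The cyclic successor of `i` in `Fin w`. -/
def succW {w : ℕ} (i : Fin w) : Fin w := ⟨((i : ℕ) + 1) % w, Nat.mod_lt _ i.pos⟩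

/-- A tuple is `R`-multilinear if no element of `[n]` occurs more than `R` times among
its coordinates. -/
def isMultilinearN {n R : ℕ} {ι : Type*} [Fintype ι] [DecidableEq ι]
    (I : ι → Fin n) : Prop :=
  ∀ a : Fin n, (Finset.univ.filter (fun t => I t = a)).card ≤ R

/-- The multiset of labeled edges of the matching cycle: for each column `i` and position
`t`, the unordered pair of the label at position `t` of column `i` and the label of its
match in column `i+1`. -/
def edgeMultiset {n w h : ℕ} (Mch : Fin w → Equiv.Perm (Fin h))
    (f : Fin w → Fin h → Fin n) : Multiset (Sym2 (Fin n)) :=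
  (Finset.univ : Finset (Fin w × Fin h)).val.map
    (fun p => Sym2.mk (f p.1 p.2) (f (succW p.1) (Mch p.1 p.2)))

section PrefixCode

variable {ι α β : Type*}

theorem card_filter_card_isRight_le [Fintype ι] [DecidableEq ι] [Fintype α] [Nonempty α]
    [Fintype β] (T : ℕ) :
    #{u : ι → β ⊕ α | #{k | (u k).isRight} ≤ T} ≤
      (Fintype.card β + 1) ^ Fintype.card ι * Fintype.card α ^ T := by
  classical
  set P : Finset ι → Finset (ι → β ⊕ α) := fun A =>
    Fintype.piFinset fun k => if k ∈ A then univ.map .inr else univ.map .inl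
  have hP : ∀ A, #(P A) = Fintype.card α ^ #A * Fintype.card β ^ (Fintype.card ι - #A) := by
    intro A
    simp only [P, Fintype.card_piFinset, apply_ite card, card_map, card_univ, prod_ite,
      prod_const, filter_mem_eq_inter, univ_inter, filter_not, card_sdiff_of_subset (subset_univ A)]
  have hcover : ({u : ι → β ⊕ α | #{k | (u k).isRight} ≤ T} : Finset _) ⊆
      {A ∈ (univ : Finset ι).powerset | #A ≤ T}.biUnion P := by
    intro u hu
    simp only [mem_filter, mem_univ, true_and] at hu
    refine mem_biUnion.2 ⟨({k | (u k).isRight} : Finset ι), by simpa using hu, ?_⟩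
    simp only [P, Fintype.mem_piFinset]
    intro k
    cases hk : u k <;> simp [hk]
  calc #{u : ι → β ⊕ α | #{k | (u k).isRight} ≤ T}
      ≤ ∑ A ∈ (univ : Finset ι).powerset with #A ≤ T, #(P A) :=
        (card_le_card hcover).trans card_biUnion_le
    _ ≤ ∑ A ∈ (univ : Finset ι).powerset,
          Fintype.card α ^ T * (1 ^ #A * Fintype.card β ^ (#(univ : Finset ι) - #A)) := by
      refine (sum_le_sum_of_subset (filter_subset _ _)).trans' (sum_le_sum fun A hA => ?_)
      rw [hP, one_pow, one_mul, card_univ]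
      exact Nat.mul_le_mul_right _ (Nat.pow_le_pow_right Fintype.card_pos (mem_filter.1 hA).2)
    _ = (Fintype.card β + 1) ^ Fintype.card ι * Fintype.card α ^ T := by
      rw [← mul_sum, sum_pow_mul_eq_add_pow, card_univ, add_comm 1, mul_comm]

def rankIn [LinearOrder α] (s : Finset α) (a : α) : ℕ := #{b ∈ s | b < a}

theorem rankIn_lt_card [LinearOrder α] {s : Finset α} {a : α} (ha : a ∈ s) : rankIn s a < #s :=
  card_lt_card <| filter_ssubset.2 ⟨a, ha, lt_irrefl a⟩

theorem rankIn_strictMonoOn [LinearOrder α] (s : Finset α) : StrictMonoOn (rankIn s) s := by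
  intro a ha b _ hab
  refine card_lt_card <|
    (ssubset_iff_of_subset fun c hc => ?_).2 ⟨a, mem_filter.2 ⟨ha, hab⟩, ?_⟩
  · exact mem_filter.2 ⟨(mem_filter.1 hc).1, (mem_filter.1 hc).2.trans hab⟩
  · simp

variable [Fintype ι] [LinearOrder ι] [LinearOrder α]
  (C : (ι → α) → ι → Finset α) (B : ℕ)

-- The test `rankIn … < B` only makes the code land in `Fin B`; under a bound `#(C x k) ≤ B`
-- it follows from `x k ∈ C x k`.
def prefixCode (x : ι → α) (k : ι) : Fin B ⊕ α :=
  if h : x k ∈ C x k ∧ rankIn (C x k) (x k) < B then .inl ⟨_, h.2⟩ else .inr (x k)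

theorem prefixCode_injective (hC : ∀ x y k, (∀ j < k, x j = y j) → C x k = C y k) :
    Function.Injective (prefixCode C B) := by
  intro x y hxy
  funext k
  induction k using WellFoundedLT.induction with
  | ind k ih =>
    have hk := congrFun hxy k
    simp only [prefixCode, hC x y k ih] at hk
    split_ifs at hk with hx hy hy
    · exact rankIn_strictMonoOn _ |>.injOn hx.1 hy.1 (by simpa using hk)
    · simpa using hk

theorem card_le_of_prefix_candidates [Fintype α] [Nonempty α] {T : ℕ}
    (hC : ∀ x y k, (∀ j < k, x j = y j) → C x k = C y k) (S : Finset (ι → α))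
    (hB : ∀ x ∈ S, ∀ k, #(C x k) ≤ B) (hT : ∀ x ∈ S, #{k | x k ∉ C x k} ≤ T) :
    #S ≤ (B + 1) ^ Fintype.card ι * Fintype.card α ^ T := by
  classical
  have hverbatim : ∀ x ∈ S, ∀ k, (prefixCode C B x k).isRight ↔ x k ∉ C x k := by
    intro x hx k
    have hrank := fun h : x k ∈ C x k => (rankIn_lt_card h).trans_le (hB x hx k)
    simp only [prefixCode]
    split_ifs with hk
    · simpa using hk.1
    · simpa using fun h => hk ⟨h, hrank h⟩
  calc #S = #(S.image (prefixCode C B)) :=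
        (card_image_of_injective _ (prefixCode_injective C B hC)).symm
    _ ≤ #{u : ι → Fin B ⊕ α | #{k | (u k).isRight} ≤ T} := by
      refine card_le_card fun u hu => ?_
      obtain ⟨x, hx, rfl⟩ := mem_image.1 hu
      simpa [hverbatim x hx] using hT x hx
    _ ≤ (B + 1) ^ Fintype.card ι * Fintype.card α ^ T := by
      simpa using card_filter_card_isRight_le (β := Fin B) T

end PrefixCode

section Multilinear

variable {n R : ℕ}

theorem isMultilinearN.comp_perm {ι : Type*} [Fintype ι] [DecidableEq ι] {I : ι → Fin n}
    (hI : isMultilinearN (R := R) I) (σ : Equiv.Perm ι) : isMultilinearN (R := R) (I ∘ σ) :=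
  fun a => (card_equiv σ fun t => by simp).trans_le (hI a)

theorem card_filter_apply_eq_le {κ ι : Type*} [Fintype κ] [Fintype ι] [DecidableEq ι]
    {f : κ → ι → Fin n} (hf : ∀ i, isMultilinearN (R := R) (f i)) (a : Fin n) :
    #{p : κ × ι | f p.1 p.2 = a} ≤ Fintype.card κ * R :=
  calc #{p : κ × ι | f p.1 p.2 = a} = ∑ i, #{j | f i j = a} := by
        simp only [card_filter]
        exact Fintype.sum_prod_type _
    _ ≤ ∑ _i : κ, R := sum_le_sum fun i _ => hf i a
    _ = Fintype.card κ * R := by simp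

end Multilinear

def Fin.prevClamped {N : ℕ} (m : Fin N) : Fin N := ⟨m - 1, by omega⟩

theorem Fin.prevClamped_le {N : ℕ} (m : Fin N) : m.prevClamped ≤ m :=
  Fin.le_def.2 (Nat.sub_le _ _)

theorem Fin.prevClamped_lt {N : ℕ} {m : Fin N} (hm : (m : ℕ) ≠ 0) : m.prevClamped < m :=
  Fin.lt_def.2 (by simp only [Fin.prevClamped]; omega)

theorem Nat.sub_one_mod_add_one_and_div {m w : ℕ} (hm : m % w ≠ 0) :
    (m - 1) % w + 1 = m % w ∧ (m - 1) / w = m / w := by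
  rcases Nat.eq_zero_or_pos w with rfl | hw
  · simp only [Nat.mod_zero, Nat.div_zero, and_true] at hm ⊢
    omega
  have hsplit : m - 1 = (m % w - 1) + w * (m / w) := by
    have := Nat.mod_add_div m w
    omega
  have hlt : m % w - 1 < w := by
    have := Nat.mod_lt m hw
    omega
  rw [hsplit, Nat.add_mul_mod_self_left, Nat.mod_eq_of_lt hlt, Nat.add_mul_div_left _ _ hw,
    Nat.div_eq_of_lt hlt]
  omega

namespace MatchingCycle

variable {w h : ℕ} (Mch : Fin w → Equiv.Perm (Fin h))

def pathPerm : ℕ → Equiv.Perm (Fin h)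
  | 0 => 1
  | k + 1 => (if hk : k < w then Mch ⟨k, hk⟩ else 1) * pathPerm k

/-- Index `m = j * w + i` is the `i`-th position, in column `i`, of the path that starts at row
`j` of column `0` and follows the matchings. -/
def pathEquiv : Fin (h * w) ≃ Fin w × Fin h :=
  finProdFinEquiv.symm.trans <| (Equiv.prodComm _ _).trans <|
    Equiv.prodShear (Equiv.refl _) fun i => pathPerm Mch i

theorem pathEquiv_apply (m : Fin (h * w)) :
    pathEquiv Mch m = (m.modNat, pathPerm Mch m.modNat m.divNat) := rfl

theorem pathEquiv_prevClamped {m : Fin (h * w)} (hm : (m : ℕ) % w ≠ 0) :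
    (succW (pathEquiv Mch m.prevClamped).1,
      Mch (pathEquiv Mch m.prevClamped).1 (pathEquiv Mch m.prevClamped).2) = pathEquiv Mch m := by
  obtain ⟨hmod, hdiv⟩ := Nat.sub_one_mod_add_one_and_div hm
  have hmod' : m.prevClamped.modNat.val + 1 = m.modNat := hmod
  have hdiv' : m.prevClamped.divNat = m.divNat := Fin.ext hdiv
  simp only [pathEquiv_apply, Prod.mk.injEq]
  constructor
  · ext
    simp only [succW, hmod']
    exact Nat.mod_eq_of_lt m.modNat.isLt
  · rw [← hmod', hdiv', Fin.coe_modNat, pathPerm, Equiv.Perm.mul_apply,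
      dif_pos (Nat.mod_lt _ m.modNat.pos)]
    rfl

theorem card_filter_mod_eq_zero_le : #{m : Fin (h * w) | (m : ℕ) % w = 0} ≤ h := by
  refine (card_le_card_of_injOn Fin.divNat (fun _ _ => mem_coe.2 (mem_univ _)) ?_).trans_eq
    (card_fin h)
  intro m₁ hm₁ m₂ hm₂ hdiv
  have hmod : m₁.modNat = m₂.modNat := Fin.ext <| by
    simp only [mem_coe, mem_filter, mem_univ, true_and] at hm₁ hm₂
    simp [hm₁, hm₂]
  exact finProdFinEquiv.symm.injective (Prod.ext hdiv hmod)

variable {α : Type*}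

def labelSeq (f : Fin w → Fin h → α) (m : Fin (h * w)) : α :=
  f (pathEquiv Mch m).1 (pathEquiv Mch m).2

theorem labelSeq_injective : Function.Injective (labelSeq Mch (α := α)) := by
  intro f g hfg
  funext i j
  simpa [labelSeq] using congrFun hfg ((pathEquiv Mch).symm (i, j))

def stepEdge {N : ℕ} (x : Fin N → α) (m : Fin N) : Sym2 α := s(x m.prevClamped, x m)

theorem stepEdge_labelSeq_mem_edgeMultiset {n : ℕ} (f : Fin w → Fin h → Fin n)
    {m : Fin (h * w)} (hm : (m : ℕ) % w ≠ 0) :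
    stepEdge (labelSeq Mch f) m ∈ edgeMultiset Mch f := by
  refine Multiset.mem_map.2 ⟨pathEquiv Mch m.prevClamped, mem_univ _, ?_⟩
  rw [stepEdge, labelSeq, labelSeq, ← pathEquiv_prevClamped Mch hm]

variable [DecidableEq α]

def priorSteps (x : Fin (h * w) → α) (m : Fin (h * w)) : Finset (Sym2 α) :=
  ({m' | m' < m ∧ (m' : ℕ) % w ≠ 0} : Finset _).image (stepEdge x)

theorem card_filter_stepEdge_not_mem_priorSteps_le (x : Fin (h * w) → α) (E : Finset (Sym2 α))
    (hE : ∀ m : Fin (h * w), (m : ℕ) % w ≠ 0 → stepEdge x m ∈ E) :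
    #{m : Fin (h * w) | (m : ℕ) % w ≠ 0 ∧ stepEdge x m ∉ priorSteps x m} ≤ #E := by
  refine card_le_card_of_injOn (stepEdge x) (fun m hm => hE m (mem_filter.1 hm).2.1) ?_
  intro m₁ hm₁ m₂ hm₂ hedge
  simp only [mem_coe, mem_filter, mem_univ, true_and] at hm₁ hm₂
  have mem_priorSteps_of_lt : ∀ {a b : Fin (h * w)}, a < b → (a : ℕ) % w ≠ 0 →
      stepEdge x a ∈ priorSteps x b := fun hab ha =>
    mem_image_of_mem _ (mem_filter.2 ⟨mem_univ _, hab, ha⟩)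
  rcases lt_trichotomy m₁ m₂ with hlt | heq | hgt
  · exact absurd (hedge ▸ mem_priorSteps_of_lt hlt hm₁.1) hm₂.2
  · exact heq
  · exact absurd (hedge ▸ mem_priorSteps_of_lt hgt hm₂.1) hm₁.2

variable [Fintype α]

def candidates (x : Fin (h * w) → α) (m : Fin (h * w)) : Finset α :=
  if (m : ℕ) % w = 0 then ∅ else univ.filter fun v => s(x m.prevClamped, v) ∈ priorSteps x m

theorem candidates_congr {m : Fin (h * w)} {x y : Fin (h * w) → α}
    (hxy : ∀ j < m, x j = y j) : candidates x m = candidates y m := by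
  unfold candidates
  split_ifs with hm
  · rfl
  have hstep : ∀ m' < m, stepEdge x m' = stepEdge y m' := by
    intro m' hm'
    rw [stepEdge, stepEdge, hxy m' hm', hxy _ ((Fin.prevClamped_le m').trans_lt hm')]
  have hprior : priorSteps x m = priorSteps y m :=
    image_congr fun m' hm' => hstep m' (mem_filter.1 hm').2.1
  rw [hprior, hxy _ (Fin.prevClamped_lt fun h0 => hm (by simp [h0]))]

theorem mem_candidates_self_iff {x : Fin (h * w) → α} {m : Fin (h * w)} :
    x m ∈ candidates x m ↔ (m : ℕ) % w ≠ 0 ∧ stepEdge x m ∈ priorSteps x m := by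
  unfold candidates
  split_ifs with hm <;> simp [hm, stepEdge]

theorem card_filter_not_mem_candidates_le (x : Fin (h * w) → α) (E : Finset (Sym2 α))
    (hE : ∀ m : Fin (h * w), (m : ℕ) % w ≠ 0 → stepEdge x m ∈ E) :
    #{m | x m ∉ candidates x m} ≤ #E + h := by
  have hsplit : ({m | x m ∉ candidates x m} : Finset (Fin (h * w))) ⊆
      univ.filter (fun m => (m : ℕ) % w ≠ 0 ∧ stepEdge x m ∉ priorSteps x m) ∪
        univ.filter (fun m => (m : ℕ) % w = 0) := by
    intro m hm
    simp only [mem_filter, mem_univ, true_and, mem_candidates_self_iff, mem_union] at hm ⊢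
    tauto
  calc _ ≤ _ := card_le_card hsplit
    _ ≤ _ := card_union_le _ _
    _ ≤ #E + h := add_le_add (card_filter_stepEdge_not_mem_priorSteps_le x E hE)
        card_filter_mod_eq_zero_le

variable {n R : ℕ}

theorem card_filter_mk_mem_edgeMultiset_le {f : Fin w → Fin h → Fin n}
    (hf : ∀ i, isMultilinearN (R := R) (f i)) (a : Fin n) :
    #{v | s(a, v) ∈ edgeMultiset Mch f} ≤ 2 * (w * R) := by
  set g : Fin w → Fin h → Fin n := fun i j => f (succW i) (Mch i j)
  have hg : ∀ i, isMultilinearN (R := R) (g i) := fun i => (hf (succW i)).comp_perm (Mch i)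
  have hsub : ({v | s(a, v) ∈ edgeMultiset Mch f} : Finset (Fin n)) ⊆
      (univ.filter fun p : Fin w × Fin h => f p.1 p.2 = a).image (fun p => g p.1 p.2) ∪
        (univ.filter fun p : Fin w × Fin h => g p.1 p.2 = a).image (fun p => f p.1 p.2) := by
    intro v hv
    obtain ⟨p, -, hp⟩ := Multiset.mem_map.1 (mem_filter.1 hv).2
    rcases Sym2.eq_iff.1 hp with ⟨hfa, hgv⟩ | ⟨hfv, hga⟩
    · exact mem_union_left _ (mem_image.2 ⟨p, by simpa using hfa, hgv⟩)
    · exact mem_union_right _ (mem_image.2 ⟨p, by simpa using hga, hfv⟩)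
  calc _ ≤ _ := card_le_card hsub
    _ ≤ _ := card_union_le _ _
    _ ≤ w * R + w * R := by
      gcongr
      · exact card_image_le.trans (by simpa using card_filter_apply_eq_le hf a)
      · exact card_image_le.trans (by simpa using card_filter_apply_eq_le hg a)
    _ = 2 * (w * R) := (two_mul _).symm

theorem card_candidates_labelSeq_le {f : Fin w → Fin h → Fin n}
    (hf : ∀ i, isMultilinearN (R := R) (f i)) (m : Fin (h * w)) :
    #(candidates (labelSeq Mch f) m) ≤ 2 * (w * R) := by
  refine (card_le_card ?_).trans
    (card_filter_mk_mem_edgeMultiset_le Mch hf (labelSeq Mch f m.prevClamped))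
  unfold candidates
  split_ifs
  · exact empty_subset _
  intro v hv
  obtain ⟨m', hm', hstep⟩ := mem_image.1 (mem_filter.1 hv).2
  exact mem_filter.2 ⟨mem_univ _,
    hstep ▸ stepEdge_labelSeq_mem_edgeMultiset Mch f (mem_filter.1 hm').2.2⟩

theorem card_le_of_isMultilinearN_of_card_edges {t : ℕ} (hn : 0 < n)
    {S : Finset (Fin w → Fin h → Fin n)}
    (hS : ∀ f ∈ S,
      (∀ i, isMultilinearN (R := R) (f i)) ∧ #(edgeMultiset Mch f).toFinset = t) :
    #S ≤ (2 * (w * R) + 1) ^ (h * w) * n ^ (t + h) := by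
  have : Nonempty (Fin n) := ⟨⟨0, hn⟩⟩
  rw [← card_image_of_injective S (labelSeq_injective Mch)]
  refine (card_le_of_prefix_candidates (T := t + h) candidates (2 * (w * R))
    (fun _ _ _ => candidates_congr) _ ?_ ?_).trans_eq (by simp)
  · rintro _ hx
    obtain ⟨f, hf, rfl⟩ := mem_image.1 hx
    exact card_candidates_labelSeq_le Mch (hS f hf).1
  · rintro _ hx
    obtain ⟨f, hf, rfl⟩ := mem_image.1 hx
    simpa [(hS f hf).2] using card_filter_not_mem_candidates_le _ (edgeMultiset Mch f).toFinset
      fun m hm => Multiset.mem_toFinset.2 (stepEdge_labelSeq_mem_edgeMultiset Mch f hm)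

end MatchingCycle

open MatchingCycle in
open Classical in
theorem count_labelings_with_multiplicities_general
    (w h n t R : ℕ) (hw : 0 < w) (hh : 0 < h) (hn : 0 < n) (hR : 0 < R)
    (α : Fin t → ℕ)
    (Mch : Fin w → Equiv.Perm (Fin h)) :
    (((Finset.univ : Finset (Fin w → Fin h → Fin n)).filter (fun f : Fin w → Fin h → Fin n =>
        (∀ i : Fin w, isMultilinearN (R := R) (f i)) ∧
        (edgeMultiset Mch f).toFinset.val.map
            (fun e => (edgeMultiset Mch f).count e) =
          (Finset.univ : Finset (Fin t)).val.map α)).card : ℝ)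
      ≤ (5 * R * w : ℝ) ^ (w * h) * ((w * h : ℝ)) ^ 3 * (n : ℝ) ^ (t + h) := by
  have hbase : (2 * (w * R) + 1 : ℝ) ≤ 5 * R * w := by
    have : (1 : ℝ) ≤ R * w := by exact_mod_cast Nat.mul_pos hR hw
    nlinarith
  have hwh : (1 : ℝ) ≤ (w * h : ℝ) ^ 3 := one_le_pow₀ (by exact_mod_cast Nat.mul_pos hw hh)
  calc _ ≤ (((2 * (w * R) + 1) ^ (h * w) * n ^ (t + h) : ℕ) : ℝ) :=
        Nat.cast_le.2 <| card_le_of_isMultilinearN_of_card_edges Mch hn fun f hf =>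
          ⟨(mem_filter.1 hf).2.1, by
            rw [Multiset.card_toFinset]
            simpa using congrArg Multiset.card (mem_filter.1 hf).2.2⟩
    _ = (2 * (w * R) + 1 : ℝ) ^ (w * h) * 1 * n ^ (t + h) := by push_cast; ring
    _ ≤ (5 * R * w : ℝ) ^ (w * h) * (w * h : ℝ) ^ 3 * n ^ (t + h) := by gcongr

open Classical in
theorem count_labelings_with_multiplicities
    (w h n t R : ℕ) (hw : 0 < w) (hh : 0 < h) (hn : 0 < n) (ht : 0 < t) (hR : 0 < R)
    (hwh : w * h ≤ n)
    (α : Fin t → ℕ) (hαeven : ∀ i, Even (α i)) (hαpos : ∀ i, 0 < α i)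
    (hsum : ∑ i, α i = w * h)
    (Mch : Fin w → Equiv.Perm (Fin h)) :
    (((Finset.univ : Finset (Fin w → Fin h → Fin n)).filter (fun f : Fin w → Fin h → Fin n =>
        (∀ i : Fin w, isMultilinearN (R := R) (f i)) ∧
        (edgeMultiset Mch f).toFinset.val.map
            (fun e => (edgeMultiset Mch f).count e) =
          (Finset.univ : Finset (Fin t)).val.map α)).card : ℝ)
      ≤ (5 * R * w : ℝ) ^ (w * h) * ((w * h : ℝ)) ^ 3 * (n : ℝ) ^ (t + h) :=
  count_labelings_with_multiplicities_general w h n t R hw hh hn hR α Mch
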